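/- Let g : [0,1] → ℝ be continuously differentiable with derivative g′. Then for every n ≥ 1, sup_{x∈[0,1]} |B_n(g;x) − g(x)| ≤ (1/√n) ω_{g′}(1/(2√n)), where ω_{g′} is the modulus of continuity of g′. -/

import Mathlib

noncomputable def bern (n k : ℕ) (x : ℝ) : ℝ :=
  (n.choose k : ℝ) * x ^ k * (1 - x) ^ (n - k)

noncomputable def bernOp (n : ℕ) (f : ℝ → ℝ) (x : ℝ) : ℝ :=
  ∑ k ∈ Finset.range (n + 1), f ((k : ℝ) / (n : ℝ)) * bern n k x

noncomputable def modCont (f : ℝ → ℝ) (δ : ℝ) : ℝ :=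
  sSup {r : ℝ | ∃ x ∈ Set.Icc (0 : ℝ) 1, ∃ y ∈ Set.Icc (0 : ℝ) 1, |x - y| ≤ δ ∧ r = |f x - f y|}

/-!
Subtracting the tangent line at `x` does not change the error, since Bernstein operators
reproduce affine functions. By the mean value inequality and the subadditivity of the modulus
of continuity, `|g y - g x - g' x (y - x)| ≤ ω(δ) (1 + |y - x| / δ) |y - x|
≤ ω(δ) (δ / 2 + 3 (y - x)² / (2δ))`. Averaging against the Bernstein weights, whose variance is
`x (1 - x) / n ≤ 1 / (4n)`, gives `ω(δ) (δ / 2 + 3 / (8 n δ))`, which equals `ω(δ) / √n`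
for `δ = 1 / (2 √n)`.
-/

open Finset Set

section Bernstein

lemma bern_eq_eval (n k : ℕ) (x : ℝ) : bern n k x = (bernsteinPolynomial ℝ n k).eval x := by
  simp [bern, bernsteinPolynomial]

lemma bern_nonneg {n k : ℕ} {x : ℝ} (hx : x ∈ Icc (0 : ℝ) 1) : 0 ≤ bern n k x :=
  mul_nonneg (mul_nonneg (Nat.cast_nonneg _) (pow_nonneg hx.1 _))
    (pow_nonneg (sub_nonneg.2 hx.2) _)

lemma sum_bern (n : ℕ) (x : ℝ) : ∑ k ∈ range (n + 1), bern n k x = 1 := by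
  simpa [Polynomial.eval_finsetSum, bern_eq_eval] using
    congrArg (Polynomial.eval x) (bernsteinPolynomial.sum ℝ n)

lemma sum_mul_bern (n : ℕ) (x : ℝ) : ∑ k ∈ range (n + 1), (k : ℝ) * bern n k x = n * x := by
  simpa [Polynomial.eval_finsetSum, bern_eq_eval] using
    congrArg (Polynomial.eval x) (bernsteinPolynomial.sum_smul ℝ n)

lemma sum_sq_mul_bern (n : ℕ) (x : ℝ) :
    ∑ k ∈ range (n + 1), ((n : ℝ) * x - k) ^ 2 * bern n k x = n * x * (1 - x) := by
  simpa [Polynomial.eval_finsetSum, bern_eq_eval] using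
    congrArg (Polynomial.eval x) (bernsteinPolynomial.variance ℝ n)

variable {n : ℕ} (hn : n ≠ 0) (x : ℝ)
include hn

lemma sum_sub_mul_bern : ∑ k ∈ range (n + 1), ((k : ℝ) / n - x) * bern n k x = 0 := by
  have hn' : (n : ℝ) ≠ 0 := Nat.cast_ne_zero.2 hn
  simp_rw [sub_mul, sum_sub_distrib, ← mul_sum, div_mul_eq_mul_div, ← sum_div, sum_mul_bern,
    sum_bern]
  field_simp
  ring

lemma sum_sub_sq_mul_bern :
    ∑ k ∈ range (n + 1), ((k : ℝ) / n - x) ^ 2 * bern n k x = x * (1 - x) / n := by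
  have hn' : (n : ℝ) ≠ 0 := Nat.cast_ne_zero.2 hn
  have hterm : ∀ k : ℕ, ((k : ℝ) / n - x) ^ 2 * bern n k x
      = ((n : ℝ) * x - k) ^ 2 * bern n k x / n ^ 2 := fun k => by field_simp; ring
  simp_rw [hterm, ← sum_div, sum_sq_mul_bern]
  field_simp

lemma bernOp_sub_eq_sum (f : ℝ → ℝ) (m : ℝ) :
    bernOp n f x - f x
      = ∑ k ∈ range (n + 1), (f ((k : ℝ) / n) - f x - m * ((k : ℝ) / n - x)) * bern n k x := by
  have hsplit : ∀ k : ℕ, (f ((k : ℝ) / n) - f x - m * ((k : ℝ) / n - x)) * bern n k x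
      = f ((k : ℝ) / n) * bern n k x - f x * bern n k x - m * (((k : ℝ) / n - x) * bern n k x) :=
    fun k => by ring
  simp_rw [hsplit, sum_sub_distrib, ← mul_sum, sum_bern, sum_sub_mul_bern hn, bernOp]
  ring

end Bernstein

section ModulusOfContinuity

variable {f : ℝ → ℝ} (hf : ContinuousOn f (Icc 0 1))
include hf

lemma abs_sub_le_modCont {δ u v : ℝ} (hu : u ∈ Icc (0 : ℝ) 1) (hv : v ∈ Icc (0 : ℝ) 1)
    (huv : |u - v| ≤ δ) : |f u - f v| ≤ modCont f δ := by
  refine le_csSup ?_ ⟨u, hu, v, hv, huv, rfl⟩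
  obtain ⟨C, hC⟩ := isCompact_Icc.exists_bound_of_continuousOn hf
  refine ⟨C + C, ?_⟩
  rintro r ⟨x, hx, y, hy, -, rfl⟩
  exact (abs_sub _ _).trans (add_le_add (hC x hx) (hC y hy))

lemma modCont_nonneg {δ : ℝ} (hδ : 0 ≤ δ) : 0 ≤ modCont f δ := by
  simpa using abs_sub_le_modCont hf (left_mem_Icc.2 zero_le_one) (left_mem_Icc.2 zero_le_one)
    (by simpa using hδ)

lemma abs_sub_le_natCast_mul_modCont {δ : ℝ} (hδ : 0 ≤ δ) (N : ℕ) {u v : ℝ}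
    (hu : u ∈ Icc (0 : ℝ) 1) (hv : v ∈ Icc (0 : ℝ) 1) (huv : u ≤ v) (hvu : v - u ≤ N * δ) :
    |f v - f u| ≤ N * modCont f δ := by
  induction N generalizing v with
  | zero =>
    obtain rfl : v = u := le_antisymm (by simpa using hvu) huv
    simp
  | succ N ih =>
    set w := max u (v - δ)
    have hw : w ∈ Icc (0 : ℝ) 1 := ⟨le_max_of_le_left hu.1, max_le hu.2 (by linarith [hv.2])⟩
    have hvw : |v - w| ≤ δ := abs_sub_le_iff.2
      ⟨by linarith [le_max_right u (v - δ)], by linarith [max_le huv (sub_le_self v hδ)]⟩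
    have hwu : |f w - f u| ≤ N * modCont f δ := by
      refine ih hw (le_max_left _ _) (sub_le_iff_le_add.2 (max_le ?_ ?_))
      · exact le_add_of_nonneg_left (by positivity)
      · push_cast at hvu; linarith
    calc |f v - f u| ≤ |f v - f w| + |f w - f u| := abs_sub_le _ _ _
      _ ≤ modCont f δ + N * modCont f δ := add_le_add (abs_sub_le_modCont hf hv hw hvw) hwu
      _ = (N + 1 : ℕ) * modCont f δ := by push_cast; ring

lemma abs_sub_le_one_add_div_mul_modCont {δ u v : ℝ} (hδ : 0 < δ)
    (hu : u ∈ Icc (0 : ℝ) 1) (hv : v ∈ Icc (0 : ℝ) 1) :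
    |f u - f v| ≤ (1 + |u - v| / δ) * modCont f δ := by
  wlog hvu : v ≤ u generalizing u v
  · rw [abs_sub_comm, abs_sub_comm u]
    exact this hv hu (le_of_not_ge hvu)
  set N := ⌈(u - v) / δ⌉₊
  have hN : (N : ℝ) ≤ 1 + |u - v| / δ := by
    rw [abs_of_nonneg (sub_nonneg.2 hvu), add_comm]
    exact (Nat.ceil_lt_add_one (div_nonneg (sub_nonneg.2 hvu) hδ.le)).le
  have hle : u - v ≤ N * δ := (div_le_iff₀ hδ).1 (Nat.le_ceil _)
  exact (abs_sub_le_natCast_mul_modCont hf hδ.le N hv hu hvu hle).trans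
    (mul_le_mul_of_nonneg_right hN (modCont_nonneg hf hδ.le))

end ModulusOfContinuity

lemma abs_sub_sub_deriv_mul_le {g g' : ℝ → ℝ} {s : Set ℝ} (hs : s.OrdConnected)
    (hderiv : ∀ t ∈ s, HasDerivWithinAt g (g' t) s t) {x y C : ℝ} (hx : x ∈ s) (hy : y ∈ s)
    (hC : ∀ t ∈ uIcc x y, |g' t - g' x| ≤ C) :
    |g y - g x - g' x * (y - x)| ≤ C * |y - x| := by
  have hsub : uIcc x y ⊆ s := hs.uIcc_subset hx hy
  have hline : ∀ t ∈ uIcc x y,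
      HasDerivWithinAt (fun t => g t - g' x * t) (g' t - g' x) (uIcc x y) t := fun t ht => by
    have := ((hderiv t (hsub ht)).mono hsub).sub ((hasDerivWithinAt_id t _).const_mul (g' x))
    rwa [mul_one] at this
  have := Convex.norm_image_sub_le_of_norm_hasDerivWithin_le hline hC (convex_uIcc x y)
    left_mem_uIcc right_mem_uIcc
  simp only [Real.norm_eq_abs] at this
  convert this using 2
  ring

lemma abs_sub_sub_deriv_mul_le_modCont {g g' : ℝ → ℝ}
    (hderiv : ∀ x ∈ Icc (0 : ℝ) 1, HasDerivWithinAt g (g' x) (Icc (0 : ℝ) 1) x)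
    (hg' : ContinuousOn g' (Icc (0 : ℝ) 1)) {δ x y : ℝ} (hδ : 0 < δ)
    (hx : x ∈ Icc (0 : ℝ) 1) (hy : y ∈ Icc (0 : ℝ) 1) :
    |g y - g x - g' x * (y - x)| ≤ modCont g' δ * (δ / 2 + 3 / (2 * δ) * (y - x) ^ 2) := by
  have hω := modCont_nonneg hg' hδ.le
  have htaylor := abs_sub_sub_deriv_mul_le ordConnected_Icc hderiv hx hy
    (C := (1 + |y - x| / δ) * modCont g' δ) fun t ht =>
    (abs_sub_le_one_add_div_mul_modCont hg' hδ (ordConnected_Icc.uIcc_subset hx hy ht) hx).trans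
      (mul_le_mul_of_nonneg_right
        (by linarith [div_le_div_of_nonneg_right (abs_sub_left_of_mem_uIcc ht) hδ.le]) hω)
  -- AM-GM: `|a| ≤ δ / 2 + a² / (2δ)`
  have hamgm : (1 + |y - x| / δ) * |y - x| ≤ δ / 2 + 3 / (2 * δ) * (y - x) ^ 2 := by
    rw [← sq_abs (y - x)]
    have := two_mul_le_add_sq δ |y - x|
    field_simp
    nlinarith
  calc _ ≤ (1 + |y - x| / δ) * modCont g' δ * |y - x| := htaylor
    _ = modCont g' δ * ((1 + |y - x| / δ) * |y - x|) := by ring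
    _ ≤ _ := mul_le_mul_of_nonneg_left hamgm hω

theorem abs_bernOp_sub_le {g g' : ℝ → ℝ}
    (hderiv : ∀ x ∈ Icc (0 : ℝ) 1, HasDerivWithinAt g (g' x) (Icc (0 : ℝ) 1) x)
    (hg' : ContinuousOn g' (Icc (0 : ℝ) 1)) {n : ℕ} (hn : n ≠ 0) {δ x : ℝ} (hδ : 0 < δ)
    (hx : x ∈ Icc (0 : ℝ) 1) :
    |bernOp n g x - g x| ≤ modCont g' δ * (δ / 2 + 3 / (2 * δ) * (x * (1 - x) / n)) := by
  have hnode : ∀ k ∈ range (n + 1), (k : ℝ) / n ∈ Icc (0 : ℝ) 1 := fun k hk =>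
    ⟨by positivity, div_le_one_of_le₀ (by exact_mod_cast mem_range_succ_iff.1 hk) n.cast_nonneg⟩
  rw [bernOp_sub_eq_sum hn x g (g' x)]
  calc _ ≤ ∑ k ∈ range (n + 1), |(g ((k : ℝ) / n) - g x - g' x * ((k : ℝ) / n - x)) * bern n k x| :=
        abs_sum_le_sum_abs _ _
    _ ≤ ∑ k ∈ range (n + 1),
          modCont g' δ * (δ / 2 + 3 / (2 * δ) * ((k : ℝ) / n - x) ^ 2) * bern n k x := by
        refine sum_le_sum fun k hk => ?_
        rw [abs_mul, abs_of_nonneg (bern_nonneg hx)]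
        exact mul_le_mul_of_nonneg_right
          (abs_sub_sub_deriv_mul_le_modCont hderiv hg' hδ hx (hnode k hk)) (bern_nonneg hx)
    _ = _ := by
        have hsplit : ∀ k : ℕ,
            modCont g' δ * (δ / 2 + 3 / (2 * δ) * ((k : ℝ) / n - x) ^ 2) * bern n k x
              = modCont g' δ * (δ / 2) * bern n k x
                + modCont g' δ * (3 / (2 * δ)) * (((k : ℝ) / n - x) ^ 2 * bern n k x) :=
          fun k => by ring
        simp_rw [hsplit, sum_add_distrib, ← mul_sum, sum_bern, sum_sub_sq_mul_bern hn]
        ring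

theorem stmt12 (g g' : ℝ → ℝ)
    (hderiv : ∀ x ∈ Set.Icc (0 : ℝ) 1, HasDerivWithinAt g (g' x) (Set.Icc (0 : ℝ) 1) x)
    (hg' : ContinuousOn g' (Set.Icc (0 : ℝ) 1))
    (n : ℕ) (hn : 1 ≤ n) :
    (⨆ x : Set.Icc (0 : ℝ) 1, |bernOp n g x - g x|)
      ≤ (1 / Real.sqrt n) * modCont g' (1 / (2 * Real.sqrt n)) := by
  have hn' : (0 : ℝ) < n := by exact_mod_cast hn
  have hω := modCont_nonneg hg' (δ := 1 / (2 * √n)) (by positivity)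
  have : Nonempty (Icc (0 : ℝ) 1) := ⟨⟨0, left_mem_Icc.2 zero_le_one⟩⟩
  refine ciSup_le fun ⟨x, hx⟩ =>
    (abs_bernOp_sub_le hderiv hg' (by omega) (δ := 1 / (2 * √n)) (by positivity) hx).trans ?_
  rw [mul_comm (1 / √n)]
  refine mul_le_mul_of_nonneg_left ?_ hω
  have hvar : x * (1 - x) ≤ 1 / 4 := by nlinarith [sq_nonneg (2 * x - 1)]
  have hsq := Real.sq_sqrt hn'.le
  have hsqrt : 0 < √(n : ℝ) := Real.sqrt_pos.2 hn'
  set s := √(n : ℝ)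
  rw [← hsq]
  field_simp
  nlinarith
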